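/- (Well-definedness of the pushing algorithm.) Let P = (π, w, dv) ∈ LD(n)^{•k} with n ≥ 1, touch(P) = r, M = max(w), m = #{i : w_i = M}, p = #{i : w_i = M and a_i(π) = 0}, and i₀ = #{i ∈ dv : w_i = M and a_i(π) = 0}. Let P̃ be the result of the pushing algorithm applied to P: every north step labelled M that starts on the main diagonal is deleted together with the east step immediately following it (its decoration, if present, is removed), and every other north step labelled M is interchanged with the east step immediately following it and its label is replaced by 0 (its decoration, if present, is kept). Then P̃ is a well-defined element of LD(m−p, n−m)^{•(k−i₀)}, and touch(P̃) = r − p + i₀, area(P̃) = area(P) − (m − p), and x^{P̃} = x^P|_{x_M = 1}. -/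

import Mathlib

open Finset
open scoped Classical

/-- The predecessor of an index (truncated subtraction at `0`). -/
def fpred {N : ℕ} (j : Fin N) : Fin N :=
  ⟨(j : ℕ) - 1, lt_of_le_of_lt (Nat.sub_le _ _) j.isLt⟩

/-- `j` is a contractible valley of the path with area word `a` and labelling `w`. -/
def IsValley {N : ℕ} (a w : Fin N → ℕ) (j : Fin N) : Prop :=
  0 < (j : ℕ) ∧
    (a j < a (fpred j) ∨ (a j = a (fpred j) ∧ w (fpred j) < w j))

/-- A decorated partially labelled Dyck path of size `N`, encoded by its area word `a`
(`a i` is the diagonal `y = x + a i` on which the `i`-th north step starts), its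
labelling `w`, and its set `dv` of decorated contractible valleys. -/
structure DecPath (N : ℕ) where
  a : Fin N → ℕ
  w : Fin N → ℕ
  dv : Finset (Fin N)
  a_first : ∀ i : Fin N, (i : ℕ) = 0 → a i = 0
  a_step : ∀ j : Fin N, 0 < (j : ℕ) → a j ≤ a (fpred j) + 1
  w_incr : ∀ j : Fin N, 0 < (j : ℕ) → a (fpred j) < a j → w (fpred j) < w j
  w_first : ∀ i : Fin N, (i : ℕ) = 0 → 0 < w i
  dv_valley : ∀ j ∈ dv, IsValley a w j

namespace DecPath

variable {N : ℕ} (P : DecPath N)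

/-- The area statistic. -/
def area : ℕ := ∑ i, P.a i

/-- `(i, j)` is a diagonal inversion (primary or secondary). -/
def Inv (i j : Fin N) : Prop :=
  i < j ∧ ((P.a i = P.a j ∧ P.w i < P.w j) ∨ (P.a i = P.a j + 1 ∧ P.w j < P.w i))

/-- The diagonal inversions whose first coordinate is not decorated. -/
noncomputable def ndinvPairs : Finset (Fin N × Fin N) :=
  Finset.univ.filter fun p => P.Inv p.1 p.2 ∧ p.1 ∉ P.dv

/-- The dinv statistic (as an integer). -/
noncomputable def dinv : ℤ := (P.ndinvPairs.card : ℤ) - (P.dv.card : ℤ)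

/-- The touch statistic. -/
noncomputable def touch : ℕ :=
  (Finset.univ.filter fun i => i ∉ P.dv ∧ P.a i = 0 ∧ 0 < P.w i).card

/-- The number of labels equal to `0`. -/
noncomputable def zeros : ℕ := (Finset.univ.filter fun i => P.w i = 0).card

/-- The maximum label. -/
def wmax : ℕ := Finset.univ.sup P.w

/-- The number of maximal labels. -/
noncomputable def maxCount : ℕ := (Finset.univ.filter fun i => P.w i = P.wmax).card

/-- The exponent vector of the monomial `x^P` (labels equal to `0` are discarded). -/
noncomputable def xexp : ℕ →₀ ℕ :=
  ∑ i, if P.w i ≠ 0 then Finsupp.single (P.w i) 1 else 0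

/-- The exponent vector of `x^P` after setting `x_M = 1` (labels equal to `0` or to `M`
are discarded). -/
noncomputable def xexpM (M : ℕ) : ℕ →₀ ℕ :=
  ∑ i, if P.w i ≠ 0 ∧ P.w i ≠ M then Finsupp.single (P.w i) 1 else 0

/-- The exponent vector of `x^P` after setting `x_{max(w)} = 1`. -/
noncomputable def xexpMax : ℕ →₀ ℕ := P.xexpM P.wmax

end DecPath

/-- The coefficient ring `ℤ[q,t]`. -/
abbrev Rqt : Type := MvPolynomial (Fin 2) ℤ

/-- The variable `q`. -/
noncomputable def q : Rqt := MvPolynomial.X 0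

/-- The variable `t`. -/
noncomputable def t : Rqt := MvPolynomial.X 1

/-- The Gaussian binomial coefficient `[n choose k]_q`, defined by the `q`-Pascal rule. -/
noncomputable def qbinom : ℕ → ℕ → Rqt
  | _, 0 => 1
  | 0, _ + 1 => 0
  | n + 1, k + 1 => qbinom n k + q ^ (k + 1) * qbinom n (k + 1)

/-!
Deleting a diagonal north step labelled `M = max w`, together with the east step after it, does
not disturb the rest of the path: labels increase up a column, so the next north step starts on
the diagonal too. Every other north step labelled `M` just moves one diagonal down. Hence all local
conditions (area steps, increasing labels, contractible valleys) between two consecutive surviving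
north steps are inherited from `P`, and a survivor not preceded by a survivor starts on the
diagonal with a label below `M`. Every statistic of `P̃` is a sum over the survivors, which is
compared with the corresponding sum for `P` index by index.
-/

theorem Finset.sum_orderEmbOfFin {α β : Type*} [LinearOrder α] [AddCommMonoid β]
    (s : Finset α) {k : ℕ} (h : #s = k) (f : α → β) :
    ∑ j, f (s.orderEmbOfFin h j) = ∑ i ∈ s, f i := by
  conv_rhs => rw [← map_orderEmbOfFin_univ s h, sum_map]
  rfl

theorem val_fpred {n : ℕ} (j : Fin n) : (fpred j : ℕ) = j - 1 := rfl

theorem Finset.orderEmbOfFin_fpred {n k : ℕ} (s : Finset (Fin n)) (h : #s = k) (j : Fin k)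
    (hpos : 0 < (s.orderEmbOfFin h j : ℕ)) (hmem : fpred (s.orderEmbOfFin h j) ∈ s) :
    0 < (j : ℕ) ∧ s.orderEmbOfFin h (fpred j) = fpred (s.orderEmbOfFin h j) := by
  set e := s.orderEmbOfFin h
  obtain ⟨j', hj'⟩ : fpred (e j) ∈ Set.range e := by rwa [range_orderEmbOfFin]
  have hj'j : j' < j := e.lt_iff_lt.mp (by rw [hj', Fin.lt_def, val_fpred]; omega)
  rw [Fin.lt_def] at hj'j
  have hle : e j' ≤ e (fpred j) := e.le_iff_le.mpr (by rw [Fin.le_def, val_fpred]; omega)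
  have hlt : e (fpred j) < e j := e.lt_iff_lt.mpr (by rw [Fin.lt_def, val_fpred]; omega)
  rw [hj', Fin.le_def, val_fpred] at hle
  rw [Fin.lt_def] at hlt
  refine ⟨by omega, Fin.ext ?_⟩
  rw [val_fpred]
  omega

theorem isValley_comp_iff {n k : ℕ} {a w : Fin n → ℕ} {e : Fin k → Fin n} {j : Fin k}
    (hj : 0 < (j : ℕ)) (hej : 0 < (e j : ℕ)) (he : e (fpred j) = fpred (e j)) :
    IsValley (a ∘ e) (w ∘ e) j ↔ IsValley a w (e j) := by
  simp [IsValley, hj, hej, he]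

namespace DecPath

variable {n : ℕ} (P : DecPath n)

theorem w_le_wmax (i : Fin n) : P.w i ≤ P.wmax := le_sup (mem_univ i)

theorem w_pos_of_zeros_eq_zero (h : P.zeros = 0) (i : Fin n) : 0 < P.w i := by
  have : i ∉ univ.filter fun i => P.w i = 0 := by
    rw [card_eq_zero.mp h]
    exact notMem_empty i
  simpa [Nat.pos_iff_ne_zero] using this

/-- Labels strictly increase up a column, so no north step can follow a maximal label. -/
theorem a_le_a_fpred_of_w_fpred_eq_wmax {j : Fin n} (hj : 0 < (j : ℕ))
    (hw : P.w (fpred j) = P.wmax) : P.a j ≤ P.a (fpred j) := by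
  by_contra! hlt
  have := P.w_incr j hj hlt
  have := P.w_le_wmax j
  omega

def survivors : Finset (Fin n) := univ.filter fun i => ¬(P.w i = P.wmax ∧ P.a i = 0)

theorem mem_survivors {i : Fin n} : i ∈ P.survivors ↔ ¬(P.w i = P.wmax ∧ P.a i = 0) := by
  simp [survivors]

theorem card_survivors_add :
    #P.survivors + #(univ.filter fun i => P.w i = P.wmax ∧ P.a i = 0) = n := by
  rw [add_comm, survivors, card_filter_add_card_filter_not, card_univ, Fintype.card_fin]

theorem fpred_mem_survivors_of_isValley {j : Fin n} (hv : IsValley P.a P.w j) :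
    fpred j ∈ P.survivors := by
  obtain ⟨hj, hv⟩ := hv
  have := P.w_le_wmax j
  rw [mem_survivors]
  omega

theorem a_eq_zero_and_w_ne_wmax_of_fpred_notMem {i : Fin n} (hi : i ∈ P.survivors)
    (hpred : ¬(0 < (i : ℕ) ∧ fpred i ∈ P.survivors)) : P.a i = 0 ∧ P.w i ≠ P.wmax := by
  have ha : P.a i = 0 := by
    by_cases hi0 : (i : ℕ) = 0
    · exact P.a_first i hi0
    · have hdel := P.mem_survivors.not.mp (fun h => hpred ⟨Nat.pos_of_ne_zero hi0, h⟩)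
      have := P.a_le_a_fpred_of_w_fpred_eq_wmax (Nat.pos_of_ne_zero hi0) (not_not.mp hdel).1
      omega
  exact ⟨ha, fun hw => P.mem_survivors.mp hi ⟨hw, ha⟩⟩

def pushA (i : Fin n) : ℕ := if P.w i = P.wmax then P.a i - 1 else P.a i

def pushW (i : Fin n) : ℕ := if P.w i = P.wmax then 0 else P.w i

variable {P}

theorem pushA_le_pushA_fpred_add_one {i : Fin n} (hi : 0 < (i : ℕ)) :
    P.pushA i ≤ P.pushA (fpred i) + 1 := by
  have hstep := P.a_step i hi
  have hmax := P.a_le_a_fpred_of_w_fpred_eq_wmax hi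
  unfold pushA
  split_ifs <;> omega

theorem pushW_fpred_lt_of_pushA_fpred_lt (hpos : ∀ i, 0 < P.w i) {i : Fin n}
    (hi : 0 < (i : ℕ)) (hlt : P.pushA (fpred i) < P.pushA i) :
    P.pushW (fpred i) < P.pushW i := by
  have hstep := P.a_step i hi
  have hincr := P.w_incr i hi
  have := hpos i
  have := P.w_le_wmax (fpred i)
  unfold pushA at hlt
  unfold pushW
  split_ifs at hlt ⊢ <;> omega

theorem isValley_pushA_pushW (hpos : ∀ i, 0 < P.w i) {i : Fin n} (hi : i ∈ P.survivors)
    (hv : IsValley P.a P.w i) : IsValley P.pushA P.pushW i := by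
  obtain ⟨hi0, hv⟩ := hv
  have hsurv := P.mem_survivors.mp hi
  have hmax := P.a_le_a_fpred_of_w_fpred_eq_wmax hi0
  have := hpos i
  have := P.w_le_wmax i
  refine ⟨hi0, ?_⟩
  unfold pushA pushW
  split_ifs <;> omega

variable {N : ℕ} (hN : #P.survivors = N)

theorem sum_comp_orderEmbOfFin_survivors {β : Type*} [AddCommMonoid β] (f : Fin n → β) :
    ∑ j, f (P.survivors.orderEmbOfFin hN j) =
      ∑ i, if P.w i = P.wmax ∧ P.a i = 0 then 0 else f i := by
  simp only [sum_orderEmbOfFin, survivors, sum_filter, ite_not]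

theorem orderEmbOfFin_fpred_or_pushA_eq_zero (hpos : ∀ i, 0 < P.w i) (j : Fin N) :
    (0 < (j : ℕ) ∧ 0 < (P.survivors.orderEmbOfFin hN j : ℕ) ∧
      P.survivors.orderEmbOfFin hN (fpred j) = fpred (P.survivors.orderEmbOfFin hN j)) ∨
    (P.pushA (P.survivors.orderEmbOfFin hN j) = 0 ∧
      0 < P.pushW (P.survivors.orderEmbOfFin hN j)) := by
  by_cases hadj : 0 < (P.survivors.orderEmbOfFin hN j : ℕ) ∧
      fpred (P.survivors.orderEmbOfFin hN j) ∈ P.survivors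
  · obtain ⟨hj, he⟩ := P.survivors.orderEmbOfFin_fpred hN j hadj.1 hadj.2
    exact Or.inl ⟨hj, hadj.1, he⟩
  · obtain ⟨ha, hw⟩ := P.a_eq_zero_and_w_ne_wmax_of_fpred_notMem (orderEmbOfFin_mem _ _ _) hadj
    exact Or.inr ⟨by simp [pushA, hw, ha], by simpa [pushW, hw] using hpos _⟩

variable (hpos : ∀ i, 0 < P.w i)

/-- The pushed path `P̃`, indexed by the surviving north steps of `P` in increasing order. -/
noncomputable def push : DecPath N where
  a := P.pushA ∘ P.survivors.orderEmbOfFin hN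
  w := P.pushW ∘ P.survivors.orderEmbOfFin hN
  dv := univ.filter fun j => P.survivors.orderEmbOfFin hN j ∈ P.dv
  a_first j hj := by
    rcases orderEmbOfFin_fpred_or_pushA_eq_zero hN hpos j with ⟨hj', -⟩ | ⟨ha, -⟩
    · omega
    · exact ha
  a_step j hj := by
    rcases orderEmbOfFin_fpred_or_pushA_eq_zero hN hpos j with ⟨-, hi, he⟩ | ⟨ha, -⟩
    · simpa only [Function.comp_apply, he] using pushA_le_pushA_fpred_add_one hi
    · simp [ha]
  w_incr j hj hlt := by
    rcases orderEmbOfFin_fpred_or_pushA_eq_zero hN hpos j with ⟨-, hi, he⟩ | ⟨ha, -⟩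
    · simp only [Function.comp_apply, he] at hlt ⊢
      exact pushW_fpred_lt_of_pushA_fpred_lt hpos hi hlt
    · simp [ha] at hlt
  w_first j hj := by
    rcases orderEmbOfFin_fpred_or_pushA_eq_zero hN hpos j with ⟨hj', -⟩ | ⟨-, hw⟩
    · omega
    · exact hw
  dv_valley j hj := by
    have hv := P.dv_valley _ (mem_filter.mp hj).2
    obtain ⟨hj', he⟩ :=
      P.survivors.orderEmbOfFin_fpred hN j hv.1 (P.fpred_mem_survivors_of_isValley hv)
    exact (isValley_comp_iff hj' hv.1 he).mpr
      (isValley_pushA_pushW hpos (orderEmbOfFin_mem _ _ _) hv)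

theorem mem_push_dv {j : Fin N} :
    j ∈ (push hN hpos).dv ↔ P.survivors.orderEmbOfFin hN j ∈ P.dv := by
  simp [push]

theorem zeros_push_add :
    (push hN hpos).zeros + #(univ.filter fun i => P.w i = P.wmax ∧ P.a i = 0) = P.maxCount := by
  have hzeros : (push hN hpos).zeros =
      ∑ i, if P.w i = P.wmax ∧ P.a i = 0 then 0 else if P.pushW i = 0 then 1 else 0 :=
    (card_filter _ _).trans
      (sum_comp_orderEmbOfFin_survivors hN fun i => if P.pushW i = 0 then 1 else 0)
  rw [hzeros, maxCount, card_filter, card_filter, ← sum_add_distrib]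
  refine sum_congr rfl fun i _ => ?_
  have := hpos i
  unfold pushW
  split_ifs <;> omega

theorem card_dv_push_add :
    #(push hN hpos).dv + #(P.dv.filter fun i => P.w i = P.wmax ∧ P.a i = 0) = #P.dv := by
  have hdv : #(push hN hpos).dv =
      ∑ i, if P.w i = P.wmax ∧ P.a i = 0 then 0 else if i ∈ P.dv then 1 else 0 :=
    (card_filter _ _).trans
      (sum_comp_orderEmbOfFin_survivors hN fun i => if i ∈ P.dv then 1 else 0)
  rw [hdv, card_filter, card_eq_sum_ones, ← Fintype.sum_ite_mem P.dv,
    ← Fintype.sum_ite_mem P.dv, ← sum_add_distrib]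
  refine sum_congr rfl fun i _ => ?_
  split_ifs <;> simp_all

theorem touch_push_add :
    (push hN hpos).touch + #(univ.filter fun i => P.w i = P.wmax ∧ P.a i = 0) =
      P.touch + #(P.dv.filter fun i => P.w i = P.wmax ∧ P.a i = 0) := by
  have htouch : (push hN hpos).touch = ∑ i, if P.w i = P.wmax ∧ P.a i = 0 then 0 else
      if i ∉ P.dv ∧ P.pushA i = 0 ∧ 0 < P.pushW i then 1 else 0 := by
    rw [touch]
    simp only [mem_push_dv]
    exact (card_filter _ _).trans (sum_comp_orderEmbOfFin_survivors hN
      fun i => if i ∉ P.dv ∧ P.pushA i = 0 ∧ 0 < P.pushW i then 1 else 0)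
  rw [htouch, touch, card_filter, card_filter, card_filter, ← Fintype.sum_ite_mem P.dv,
    ← sum_add_distrib, ← sum_add_distrib]
  refine sum_congr rfl fun i _ => ?_
  have := hpos i
  unfold pushA pushW
  split_ifs <;> simp_all

theorem area_push_add :
    (push hN hpos).area + P.maxCount =
      P.area + #(univ.filter fun i => P.w i = P.wmax ∧ P.a i = 0) := by
  have harea : (push hN hpos).area =
      ∑ i, if P.w i = P.wmax ∧ P.a i = 0 then 0 else P.pushA i :=
    sum_comp_orderEmbOfFin_survivors hN P.pushA
  rw [harea, area, maxCount, card_filter, card_filter, ← sum_add_distrib, ← sum_add_distrib]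
  refine sum_congr rfl fun i _ => ?_
  unfold pushA
  split_ifs <;> omega

theorem xexp_push : (push hN hpos).xexp = P.xexpMax := by
  refine (sum_comp_orderEmbOfFin_survivors hN
    (fun i => if P.pushW i ≠ 0 then Finsupp.single (P.pushW i) 1 else 0)).trans
    (sum_congr rfl fun i _ => ?_)
  by_cases hw : P.w i = P.wmax <;> simp [pushW, hw, (hpos i).ne']

end DecPath

theorem pushing_algorithm_well_defined_general
    (n k r m p i₀ : ℕ) (P : DecPath n)
    (hzeros : P.zeros = 0) (hdv : P.dv.card = k) (hr : P.touch = r)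
    (hm : P.maxCount = m)
    (hp : (Finset.univ.filter fun i : Fin n => P.w i = P.wmax ∧ P.a i = 0).card = p)
    (hi₀ : (P.dv.filter fun i : Fin n => P.w i = P.wmax ∧ P.a i = 0).card = i₀) :
    ∃ (P' : DecPath (n - p)) (e : Fin (n - p) → Fin n),
      StrictMono e ∧
      Set.range e = {i : Fin n | ¬(P.w i = P.wmax ∧ P.a i = 0)} ∧
      (∀ j, P'.a j = if P.w (e j) = P.wmax then P.a (e j) - 1 else P.a (e j)) ∧
      (∀ j, P'.w j = if P.w (e j) = P.wmax then 0 else P.w (e j)) ∧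
      (∀ j, j ∈ P'.dv ↔ e j ∈ P.dv) ∧
      (P'.zeros : ℤ) = (m : ℤ) - (p : ℤ) ∧
      (P'.dv.card : ℤ) = (k : ℤ) - (i₀ : ℤ) ∧
      (P'.touch : ℤ) = (r : ℤ) - (p : ℤ) + (i₀ : ℤ) ∧
      (P'.area : ℤ) = (P.area : ℤ) - ((m : ℤ) - (p : ℤ)) ∧
      P'.xexp = P.xexpMax := by
  have hpos := P.w_pos_of_zeros_eq_zero hzeros
  have hN : #P.survivors = n - p := by
    have := P.card_survivors_add
    omega
  have hzeros' := DecPath.zeros_push_add hN hpos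
  have hdv' := DecPath.card_dv_push_add hN hpos
  have htouch' := DecPath.touch_push_add hN hpos
  have harea' := DecPath.area_push_add hN hpos
  refine ⟨DecPath.push hN hpos, P.survivors.orderEmbOfFin hN,
    (P.survivors.orderEmbOfFin hN).strictMono, ?_, fun _ => rfl, fun _ => rfl,
    fun _ => DecPath.mem_push_dv hN hpos, ?_, ?_, ?_, ?_, DecPath.xexp_push hN hpos⟩
  · ext i
    simp [DecPath.survivors]
  all_goals omega

/-- (Well-definedness of the pushing algorithm.) Let `P ∈ LD(n)^{•k}` (no
zero labels) with `n ≥ 1`, `touch P = r`, maximal label `M = max(w)`, `m` maximal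
labels, of which `p` start on the main diagonal, `i₀` of those being decorated. The
pushing algorithm (delete every diagonal maximal north step together with the east step
following it, removing its decoration; interchange every other maximal north step with
the east step following it, relabelling it by `0` and keeping its decoration) produces a
well-defined element `P̃ ∈ LD(m-p, n-m)^{•(k-i₀)}`, of size `n - p`, with
`touch P̃ = r - p + i₀`, `area P̃ = area P - (m - p)` and `x^{P̃} = x^P|_{x_M = 1}`.
The reindexing of the surviving steps is recorded by a strictly monotone map `e`. -/
theorem pushing_algorithm_well_defined
    (n k r m p i₀ : ℕ) (hn : 1 ≤ n) (P : DecPath n)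
    (hzeros : P.zeros = 0) (hdv : P.dv.card = k) (hr : P.touch = r)
    (hm : P.maxCount = m)
    (hp : (Finset.univ.filter fun i : Fin n => P.w i = P.wmax ∧ P.a i = 0).card = p)
    (hi₀ : (P.dv.filter fun i : Fin n => P.w i = P.wmax ∧ P.a i = 0).card = i₀) :
    ∃ (P' : DecPath (n - p)) (e : Fin (n - p) → Fin n),
      StrictMono e ∧
      Set.range e = {i : Fin n | ¬(P.w i = P.wmax ∧ P.a i = 0)} ∧
      (∀ j, P'.a j = if P.w (e j) = P.wmax then P.a (e j) - 1 else P.a (e j)) ∧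
      (∀ j, P'.w j = if P.w (e j) = P.wmax then 0 else P.w (e j)) ∧
      (∀ j, j ∈ P'.dv ↔ e j ∈ P.dv) ∧
      (P'.zeros : ℤ) = (m : ℤ) - (p : ℤ) ∧
      (P'.dv.card : ℤ) = (k : ℤ) - (i₀ : ℤ) ∧
      (P'.touch : ℤ) = (r : ℤ) - (p : ℤ) + (i₀ : ℤ) ∧
      (P'.area : ℤ) = (P.area : ℤ) - ((m : ℤ) - (p : ℤ)) ∧
      P'.xexp = P.xexpMax :=
  pushing_algorithm_well_defined_general n k r m p i₀ P hzeros hdv hr hm hp hi₀
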